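/- Let ψ₁, ψ₂ ∈ ℂ′ with ψ₂ invertible in ℂ′ and δ := Re(ψ₂ψ̄₂ − ψ₁ψ̄₁) ≠ 0, and set g := i′·ψ̄₁·ψ₂⁻¹. Then 1 + Re(g·ḡ) = δ / Re(ψ₂ψ̄₂) ≠ 0, and the inverse stereographic projection of g, namely P(g) := ((2·Re g)/s, (2·Im g)/s, Re(1 − g·ḡ)/s) with s := 1 + Re(g·ḡ), equals (1/δ)·(−2·Im(ψ₁ψ₂), 2·Re(ψ₁ψ₂), Re(ψ₂ψ̄₂ + ψ₁ψ̄₁)). -/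

import Mathlib

noncomputable section

/-- Para-complex numbers modeled as the product ring ℝ × ℝ. -/
abbrev Cp : Type := ℝ × ℝ

/-- The para-complex unit i′ = (1, -1), satisfying i′² = 1. -/
def ip : Cp := (1, -1)

/-- Para-complex conjugation. -/
def pconj (z : Cp) : Cp := (z.2, z.1)

/-- Real part of a para-complex number. -/
def pRe (z : Cp) : ℝ := (z.1 + z.2) / 2

/-- Imaginary part of a para-complex number. -/
def pIm (z : Cp) : ℝ := (z.1 - z.2) / 2

/-- Embedding of ℝ into the para-complex numbers. -/
def oR (r : ℝ) : Cp := (r, r)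

/-- The exponential of the Banach algebra ℝ × ℝ (componentwise real exponential). -/
def pexp (z : Cp) : Cp := (Real.exp z.1, Real.exp z.2)

/-- The para-complex derivative ∂_z f = ½(∂ₓf + i′ ∂_y f). -/
def dz (f : Cp → Cp) (p : Cp) : Cp :=
  oR (1/2) * (fderiv ℝ f p (1, 0) + ip * fderiv ℝ f p (0, 1))

/-- The para-complex derivative ∂_z̄ f = ½(∂ₓf − i′ ∂_y f). -/
def dzbar (f : Cp → Cp) (p : Cp) : Cp :=
  oR (1/2) * (fderiv ℝ f p (1, 0) - ip * fderiv ℝ f p (0, 1))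

/-!
Write `N z := z.1 * z.2` (`pnormSq` below), so that `z * z̄ = N z` (embedded in `ℂ′`). `N` is multiplicative,
commutes with inversion and `N i′ = -1`; hence `N g = -N ψ₁ / N ψ₂`, which gives
`s = (N ψ₂ - N ψ₁) / N ψ₂ = δ / N ψ₂`. Moreover `ψ₂⁻¹ = ψ̄₂ / N ψ₂`, so
`g = i′ · conj (ψ₁ ψ₂) / N ψ₂`, whose real and imaginary parts are `-Im (ψ₁ ψ₂) / N ψ₂` and
`Re (ψ₁ ψ₂) / N ψ₂`. Dividing by `s` turns the denominators `N ψ₂` into `δ`.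
-/

def pnormSq (z : Cp) : ℝ := z.1 * z.2

lemma oR_eq_zero {r : ℝ} : oR r = 0 ↔ r = 0 := by
  simp [oR, Prod.ext_iff]

lemma pconj_mul (z w : Cp) : pconj (z * w) = pconj z * pconj w := rfl

lemma mul_pconj_self (z : Cp) : z * pconj z = oR (pnormSq z) :=
  Prod.ext rfl (mul_comm _ _)

lemma pnormSq_mul (z w : Cp) : pnormSq (z * w) = pnormSq z * pnormSq w := by
  simp only [pnormSq, Prod.fst_mul, Prod.snd_mul]
  ring

lemma pnormSq_inv (z : Cp) : pnormSq z⁻¹ = (pnormSq z)⁻¹ :=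
  (mul_inv z.1 z.2).symm

lemma pnormSq_pconj (z : Cp) : pnormSq (pconj z) = pnormSq z :=
  mul_comm _ _

lemma pnormSq_ip : pnormSq ip = -1 := by
  simp [pnormSq, ip]

lemma inv_eq_oR_inv_mul_pconj {z : Cp} (hz : pnormSq z ≠ 0) :
    z⁻¹ = oR (pnormSq z)⁻¹ * pconj z := by
  have h₁ : z.1 ≠ 0 := left_ne_zero_of_mul hz
  have h₂ : z.2 ≠ 0 := right_ne_zero_of_mul hz
  refine Prod.ext ?_ ?_ <;>
    simp only [pnormSq, oR, pconj, Prod.fst_inv, Prod.snd_inv, Prod.fst_mul, Prod.snd_mul] <;>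
    field_simp

lemma pRe_add (z w : Cp) : pRe (z + w) = pRe z + pRe w := by
  simp only [pRe, Prod.fst_add, Prod.snd_add]
  ring

lemma pRe_sub (z w : Cp) : pRe (z - w) = pRe z - pRe w := by
  simp only [pRe, Prod.fst_sub, Prod.snd_sub]
  ring

lemma pRe_one : pRe 1 = 1 := by
  simp [pRe]

lemma pRe_mul_pconj_self (z : Cp) : pRe (z * pconj z) = pnormSq z := by
  rw [mul_pconj_self]
  simp [pRe, oR]

lemma pRe_oR_mul (r : ℝ) (z : Cp) : pRe (oR r * z) = r * pRe z := by
  simp only [pRe, oR, Prod.fst_mul, Prod.snd_mul]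
  ring

lemma pIm_oR_mul (r : ℝ) (z : Cp) : pIm (oR r * z) = r * pIm z := by
  simp only [pIm, oR, Prod.fst_mul, Prod.snd_mul]
  ring

lemma pRe_ip_mul_pconj (w : Cp) : pRe (ip * pconj w) = -pIm w := by
  simp only [pRe, pIm, ip, pconj, Prod.fst_mul, Prod.snd_mul]
  ring

lemma pIm_ip_mul_pconj (w : Cp) : pIm (ip * pconj w) = pRe w := by
  simp only [pRe, pIm, ip, pconj, Prod.fst_mul, Prod.snd_mul]
  ring

/-- The inverse stereographic projection of the projected normal Gauss map
g = i′ ψ̄₁ ψ₂⁻¹ recovers the represented normal Gauss map. -/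
theorem gauss_map_stereographic (ψ₁ ψ₂ : Cp) (hψ₂ : ψ₂ * pconj ψ₂ ≠ 0)
    (δ : ℝ) (hδdef : δ = pRe (ψ₂ * pconj ψ₂ - ψ₁ * pconj ψ₁)) (hδ : δ ≠ 0)
    (g : Cp) (hg : g = ip * pconj ψ₁ * ψ₂⁻¹)
    (s : ℝ) (hs : s = 1 + pRe (g * pconj g)) :
    s = δ / pRe (ψ₂ * pconj ψ₂) ∧ s ≠ 0 ∧
    (2 * pRe g / s, 2 * pIm g / s, pRe (1 - g * pconj g) / s) =
      ((1 / δ) * (-2 * pIm (ψ₁ * ψ₂)), (1 / δ) * (2 * pRe (ψ₁ * ψ₂)),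
        (1 / δ) * pRe (ψ₂ * pconj ψ₂ + ψ₁ * pconj ψ₁)) := by
  have hN₂ : pnormSq ψ₂ ≠ 0 := by rwa [mul_pconj_self, Ne, oR_eq_zero] at hψ₂
  have hδN : δ = pnormSq ψ₂ - pnormSq ψ₁ := by
    rw [hδdef, pRe_sub, pRe_mul_pconj_self, pRe_mul_pconj_self]
  have hgN : pnormSq g = -(pnormSq ψ₁ / pnormSq ψ₂) := by
    rw [hg, pnormSq_mul, pnormSq_mul, pnormSq_ip, pnormSq_pconj, pnormSq_inv]
    ring
  have hsN : s = δ / pnormSq ψ₂ := by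
    rw [hs, pRe_mul_pconj_self, hgN, hδN]
    field_simp
    ring
  have hg' : g = oR (pnormSq ψ₂)⁻¹ * (ip * pconj (ψ₁ * ψ₂)) := by
    rw [hg, inv_eq_oR_inv_mul_pconj hN₂, pconj_mul]
    ring
  refine ⟨by rw [hsN, pRe_mul_pconj_self], hsN ▸ div_ne_zero hδ hN₂, ?_⟩
  rw [pRe_sub, pRe_one, pRe_add, pRe_mul_pconj_self, pRe_mul_pconj_self, pRe_mul_pconj_self,
    hgN, sub_neg_eq_add, hg', pRe_oR_mul, pIm_oR_mul, pRe_ip_mul_pconj, pIm_ip_mul_pconj, hsN, hδN]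
  have hδ' : pnormSq ψ₂ - pnormSq ψ₁ ≠ 0 := hδN ▸ hδ
  simp only [Prod.mk.injEq]
  refine ⟨?_, ?_, ?_⟩ <;> field_simp
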